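/- Let (M, μ) be a measure space with 0 < μ(M) ≤ V < ∞, let n ≥ 2 be an integer, and let ε > 0. Let δ > 0 satisfy 3(n-1)δ/(4(1+δ)) ≤ ε, and let λ ≥ 1, A > 0, B > 0, K > 0. Suppose φ, ψ : M → ℝ are measurable functions such that ‖ψ‖_{L^{1+δ}(μ)} ≤ K·‖φ‖_{L^{1+δ}(μ)}, ‖φ‖_{L^∞(μ)} ≤ A·λ^{(n-1)/2}, and ‖φ‖_{L^1(μ)} ≥ B·λ^{-(n-1)/4}. Then ‖ψ‖_{L^1(μ)} ≤ V^{δ/(1+δ)} · K · (A/B)^{δ/(1+δ)} · λ^{ε} · ‖φ‖_{L^1(μ)}. -/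

import Mathlib

open MeasureTheory ENNReal

/-!
Put `p = 1 + δ` and `θ = 1 - 1/p = δ/(1+δ)`. Hölder's inequality on the finite measure space
gives `‖ψ‖₁ ≤ μ(M)^θ ‖ψ‖_p ≤ μ(M)^θ K ‖φ‖_p`, and interpolation between `L¹` and `L^∞`
(`|φ|^p ≤ ‖φ‖_∞^(p-1) |φ|` pointwise) gives `‖φ‖_p ≤ ‖φ‖_∞^θ ‖φ‖₁^(1-θ)`.
With `a = A λ^((n-1)/2) ≥ ‖φ‖_∞` and `b = B λ^(-(n-1)/4) ≤ ‖φ‖₁` we have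
`b^θ ‖φ‖₁^(1-θ) ≤ ‖φ‖₁`, hence `‖ψ‖₁ ≤ μ(M)^θ K (a/b)^θ ‖φ‖₁`, and
`(a/b)^θ = (A/B)^θ λ^(3(n-1)θ/4) ≤ (A/B)^θ λ^ε`.
-/

theorem ENNReal.rpow_le_rpow_sub_one_mul {x c : ℝ≥0∞} {q : ℝ} (hq : 1 ≤ q) (hx : x ≤ c) :
    x ^ q ≤ c ^ (q - 1) * x := by
  calc x ^ q = x ^ (q - 1) * x ^ (1 : ℝ) := by
        rw [← ENNReal.rpow_add_of_nonneg _ _ (by linarith) zero_le_one, sub_add_cancel]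
    _ ≤ c ^ (q - 1) * x := by rw [rpow_one]; gcongr

theorem ENNReal.rpow_mul_rpow_one_sub_le_div_rpow_mul {x y a b : ℝ≥0∞} {θ : ℝ}
    (hθ0 : 0 ≤ θ) (hθ1 : θ ≤ 1) (hx : x ≤ a) (hb : b ≤ y) (hb0 : b ≠ 0) (hb_top : b ≠ ∞) :
    x ^ θ * y ^ (1 - θ) ≤ (a / b) ^ θ * y := by
  have hby : b ^ θ * y ^ (1 - θ) ≤ y :=
    calc b ^ θ * y ^ (1 - θ) ≤ y ^ θ * y ^ (1 - θ) := by gcongr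
      _ = y := by rw [← ENNReal.rpow_add_of_nonneg _ _ hθ0 (by linarith), add_sub_cancel, rpow_one]
  calc x ^ θ * y ^ (1 - θ) ≤ a ^ θ * y ^ (1 - θ) := by gcongr
    _ = (a / b) ^ θ * (b ^ θ * y ^ (1 - θ)) := by
      rw [← mul_assoc, ← mul_rpow_of_nonneg _ _ hθ0, ENNReal.div_mul_cancel hb0 hb_top]
    _ ≤ (a / b) ^ θ * y := by gcongr

section Interpolation

variable {α E F : Type*} [MeasurableSpace α] [NormedAddCommGroup E] [NormedAddCommGroup F]
  {μ : Measure α}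

theorem eLpNorm_le_eLpNorm_top_rpow_mul_eLpNorm_one_rpow {f : α → E} {p : ℝ≥0∞}
    (hp1 : 1 ≤ p) (hp : p ≠ ∞) (hf : eLpNorm f ∞ μ ≠ ∞) :
    eLpNorm f p μ ≤ eLpNorm f ∞ μ ^ (1 - p.toReal⁻¹) * eLpNorm f 1 μ ^ p.toReal⁻¹ := by
  have hq : 1 ≤ p.toReal := by simpa using ENNReal.toReal_mono hp hp1
  have hlintegral :
      ∫⁻ x, ‖f x‖ₑ ^ p.toReal ∂μ ≤ eLpNorm f ∞ μ ^ (p.toReal - 1) * eLpNorm f 1 μ := by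
    rw [eLpNorm_one_eq_lintegral_enorm,
      ← lintegral_const_mul' _ _ (rpow_ne_top_of_nonneg (by linarith) hf)]
    refine lintegral_mono_ae ?_
    filter_upwards [enorm_ae_le_eLpNormEssSup f μ] with x hx
    exact rpow_le_rpow_sub_one_mul hq (by rwa [eLpNorm_exponent_top])
  calc eLpNorm f p μ = (∫⁻ x, ‖f x‖ₑ ^ p.toReal ∂μ) ^ p.toReal⁻¹ := by
        rw [eLpNorm_eq_lintegral_rpow_enorm_toReal (by positivity) hp, one_div]
    _ ≤ (eLpNorm f ∞ μ ^ (p.toReal - 1) * eLpNorm f 1 μ) ^ p.toReal⁻¹ := by gcongr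
    _ = eLpNorm f ∞ μ ^ (1 - p.toReal⁻¹) * eLpNorm f 1 μ ^ p.toReal⁻¹ := by
      rw [mul_rpow_of_nonneg _ _ (by positivity), ← rpow_mul]
      congr 2
      field_simp

theorem eLpNorm_one_le_of_eLpNorm_le_mul {φ : α → E} {ψ : α → F} {p K a b : ℝ≥0∞}
    (hp1 : 1 ≤ p) (hp : p ≠ ∞) (hψ : AEStronglyMeasurable ψ μ)
    (hψφ : eLpNorm ψ p μ ≤ K * eLpNorm φ p μ) (ha : eLpNorm φ ∞ μ ≤ a) (ha_top : a ≠ ∞)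
    (hb : b ≤ eLpNorm φ 1 μ) (hb0 : b ≠ 0) (hb_top : b ≠ ∞) :
    eLpNorm ψ 1 μ ≤
      μ Set.univ ^ (1 - p.toReal⁻¹) * K * (a / b) ^ (1 - p.toReal⁻¹) * eLpNorm φ 1 μ := by
  have hq : 1 ≤ p.toReal := by simpa using ENNReal.toReal_mono hp hp1
  have hθ0 : 0 ≤ 1 - p.toReal⁻¹ := sub_nonneg.2 (inv_le_one_of_one_le₀ hq)
  have hθ1 : 1 - p.toReal⁻¹ ≤ 1 := by linarith [inv_nonneg.2 (zero_le_one.trans hq)]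
  have hinterp : eLpNorm φ p μ ≤
      eLpNorm φ ∞ μ ^ (1 - p.toReal⁻¹) * eLpNorm φ 1 μ ^ (1 - (1 - p.toReal⁻¹)) := by
    rw [_root_.sub_sub_cancel]
    exact eLpNorm_le_eLpNorm_top_rpow_mul_eLpNorm_one_rpow hp1 hp (ne_top_of_le_ne_top ha_top ha)
  calc eLpNorm ψ 1 μ ≤ eLpNorm ψ p μ * μ Set.univ ^ (1 - p.toReal⁻¹) := by
        simpa using eLpNorm_le_eLpNorm_mul_rpow_measure_univ hp1 hψ
    _ ≤ K * eLpNorm φ p μ * μ Set.univ ^ (1 - p.toReal⁻¹) := by gcongr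
    _ ≤ K * (eLpNorm φ ∞ μ ^ (1 - p.toReal⁻¹) * eLpNorm φ 1 μ ^ (1 - (1 - p.toReal⁻¹)))
          * μ Set.univ ^ (1 - p.toReal⁻¹) := by gcongr
    _ ≤ K * ((a / b) ^ (1 - p.toReal⁻¹) * eLpNorm φ 1 μ) * μ Set.univ ^ (1 - p.toReal⁻¹) := by
      gcongr K * ?_ * _
      exact rpow_mul_rpow_one_sub_le_div_rpow_mul hθ0 hθ1 ha hb hb0 hb_top
    _ = μ Set.univ ^ (1 - p.toReal⁻¹) * K * (a / b) ^ (1 - p.toReal⁻¹) * eLpNorm φ 1 μ := by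
      ring

end Interpolation

theorem Real.mul_rpow_div_mul_rpow_le {A B lam s θ ε : ℝ} (hA : 0 ≤ A) (hB : 0 ≤ B)
    (hlam : 1 ≤ lam) (hε : 3 * s / 4 * θ ≤ ε) :
    (A * lam ^ (s / 2) / (B * lam ^ (-s / 4))) ^ θ ≤ (A / B) ^ θ * lam ^ ε := by
  have hlam0 : 0 < lam := by linarith
  have hsplit : A * lam ^ (s / 2) / (B * lam ^ (-s / 4)) = A / B * lam ^ (3 * s / 4) := by
    rw [mul_div_mul_comm, ← Real.rpow_sub hlam0]
    ring_nf
  rw [hsplit, Real.mul_rpow (div_nonneg hA hB) (by positivity), ← Real.rpow_mul hlam0.le]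
  gcongr

theorem l1_bound_of_lp_bound_general
    {M : Type*} [MeasurableSpace M] (μ : Measure M)
    (V : ℝ) (hμpos : 0 < μ Set.univ) (hμV : μ Set.univ ≤ ENNReal.ofReal V)
    (n : ℕ) (ε δ lam A B K : ℝ) (hδ : 0 < δ)
    (hδε : 3 * ((n : ℝ) - 1) * δ / (4 * (1 + δ)) ≤ ε)
    (hlam : 1 ≤ lam) (hA : 0 < A) (hB : 0 < B) (hK : 0 < K)
    (φ ψ : M → ℝ) (hψ : Measurable ψ)
    (hψφ : eLpNorm ψ (ENNReal.ofReal (1 + δ)) μ ≤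
      ENNReal.ofReal K * eLpNorm φ (ENNReal.ofReal (1 + δ)) μ)
    (hLinfty : eLpNorm φ ⊤ μ ≤ ENNReal.ofReal (A * lam ^ (((n : ℝ) - 1) / 2)))
    (hL1 : ENNReal.ofReal (B * lam ^ (-((n : ℝ) - 1) / 4)) ≤ eLpNorm φ 1 μ) :
    eLpNorm ψ 1 μ ≤
      ENNReal.ofReal (V ^ (δ / (1 + δ)) * K * (A / B) ^ (δ / (1 + δ)) * lam ^ ε)
        * eLpNorm φ 1 μ := by
  have hV : 0 < V := ENNReal.ofReal_pos.1 (hμpos.trans_le hμV)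
  have hb : 0 < B * lam ^ (-((n : ℝ) - 1) / 4) := by positivity
  have hθ : 1 - (ENNReal.ofReal (1 + δ)).toReal⁻¹ = δ / (1 + δ) := by
    rw [toReal_ofReal (by positivity)]
    field_simp
    ring
  have hbound := eLpNorm_one_le_of_eLpNorm_le_mul
    (ENNReal.one_le_ofReal.2 (by linarith)) ofReal_ne_top hψ.aestronglyMeasurable hψφ
    hLinfty ofReal_ne_top hL1 (ofReal_pos.2 hb).ne' ofReal_ne_top
  rw [hθ, ← ofReal_div_of_pos hb] at hbound
  refine hbound.trans (mul_le_mul_left ?_ _)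
  calc μ Set.univ ^ (δ / (1 + δ)) * ENNReal.ofReal K * _
      ≤ ENNReal.ofReal V ^ (δ / (1 + δ)) * ENNReal.ofReal K *
          ENNReal.ofReal ((A / B) ^ (δ / (1 + δ)) * lam ^ ε) := by
        rw [ofReal_rpow_of_nonneg (by positivity) (by positivity)]
        gcongr
        refine Real.mul_rpow_div_mul_rpow_le hA.le hB.le hlam ?_
        calc _ = 3 * ((n : ℝ) - 1) * δ / (4 * (1 + δ)) := by field_simp
          _ ≤ ε := hδε
    _ = ENNReal.ofReal (V ^ (δ / (1 + δ)) * K * (A / B) ^ (δ / (1 + δ)) * lam ^ ε) := by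
      rw [ofReal_rpow_of_nonneg hV.le (by positivity), ← ofReal_mul (by positivity),
        ← ofReal_mul (by positivity), mul_assoc _ ((A / B) ^ _)]

/-- Lemma 3.2 of the paper in abstract form: if `ψ` is bounded by `φ` in `L^(1+δ)` norm,
`φ` satisfies an `L^∞` upper bound of size `λ^((n-1)/2)` and an `L¹` lower bound of size
`λ^(-(n-1)/4)`, then the `L¹` norm of `ψ` is bounded by `C λ^ε` times the `L¹` norm of `φ`. -/
theorem l1_bound_of_lp_bound
    {M : Type*} [MeasurableSpace M] (μ : Measure M)
    (V : ℝ) (hμpos : 0 < μ Set.univ) (hμV : μ Set.univ ≤ ENNReal.ofReal V)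
    (n : ℕ) (hn : 2 ≤ n) (ε δ lam A B K : ℝ) (hε : 0 < ε) (hδ : 0 < δ)
    (hδε : 3 * ((n : ℝ) - 1) * δ / (4 * (1 + δ)) ≤ ε)
    (hlam : 1 ≤ lam) (hA : 0 < A) (hB : 0 < B) (hK : 0 < K)
    (φ ψ : M → ℝ) (hφ : Measurable φ) (hψ : Measurable ψ)
    (hψφ : eLpNorm ψ (ENNReal.ofReal (1 + δ)) μ ≤
      ENNReal.ofReal K * eLpNorm φ (ENNReal.ofReal (1 + δ)) μ)
    (hLinfty : eLpNorm φ ⊤ μ ≤ ENNReal.ofReal (A * lam ^ (((n : ℝ) - 1) / 2)))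
    (hL1 : ENNReal.ofReal (B * lam ^ (-((n : ℝ) - 1) / 4)) ≤ eLpNorm φ 1 μ) :
    eLpNorm ψ 1 μ ≤
      ENNReal.ofReal (V ^ (δ / (1 + δ)) * K * (A / B) ^ (δ / (1 + δ)) * lam ^ ε)
        * eLpNorm φ 1 μ :=
  l1_bound_of_lp_bound_general μ V hμpos hμV n ε δ lam A B K hδ hδε hlam hA hB hK φ ψ hψ hψφ hLinfty
    hL1
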